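/- Locality of linearizability for a multi-distributed ledger object: if H is a finite, complete, well-formed history over a finite set O of ledger objects and for every object D ∈ O the projection H|D is linearizable with respect to the ledger sequential specification, then H itself is linearizable: there exists a sequential permutation σ of all operations of H such that σ respects the happens-before order of H and, for every D ∈ O, the projection of σ onto D satisfies the ledger sequential specification. -/

import Mathlib

/-!
STATEMENT 12. Locality of linearizability for a multi-distributed ledger object: if H is
a finite, complete, well-formed history over a finite set O of ledger objects and for
every object D ∈ O the projection H|D is linearizable with respect to the ledger
sequential specification, then H itself is linearizable: there exists a sequential
permutation σ of all operations of H such that σ respects the happens-before order of H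
and, for every D ∈ O, the projection of σ onto D satisfies the ledger sequential
specification.

Modeling: a (complete) operation is a record consisting of the object it acts on, the
process issuing it, its action (a `get` returning a list of records, or an `append` of a
record), and the times of its invocation and matching response events; completeness is
thus built in.  A history is a finite list of such operations.  `π₁` happens before `π₂`
if `π₁`'s response time precedes `π₂`'s invocation time.  A sequential permutation of a
history is a list that is a permutation of it; it respects happens-before if no operation
is placed before one that happens before it.  The ledger sequential specification is the
inductive predicate `LedgerRun V ops`: starting from record sequence `V`, a `get` returns
the current sequence leaving it unchanged, an `append r` with `r` not in the sequence
extends it by `r`, and (idempotence) an `append r` with `r` already present leaves it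
unchanged.
-/

/-- Actions on a ledger: a `get` returning a sequence of records, or an `append` of a
record. -/
inductive LedgerAct (R : Type) where
  | get : List R → LedgerAct R
  | append : R → LedgerAct R

/-- A complete operation of a history: the object and process it belongs to, its action,
and the times of its invocation and response events. -/
structure LOp (O P R : Type) where
  obj : O
  proc : P
  act : LedgerAct R
  invT : ℕ
  resT : ℕ

/-- `π₁` happens before `π₂`: the response event of `π₁` precedes the invocation event
of `π₂`. -/
def hb {O P R : Type} (a b : LOp O P R) : Prop := a.resT < b.invT

/-- The ledger sequential specification: `LedgerRun V ops` holds when the sequence of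
operations `ops`, run sequentially from ledger state `V`, conforms to the specification:
a get returns the current sequence and leaves it unchanged; an append of a record not in
the sequence extends the sequence by it; an append of a record already present leaves the
sequence unchanged (idempotence). -/
inductive LedgerRun {O P R : Type} : List R → List (LOp O P R) → Prop
  | nil : ∀ V, LedgerRun V []
  | get : ∀ (V : List R) (op : LOp O P R) (t : List (LOp O P R)),
      op.act = LedgerAct.get V → LedgerRun V t → LedgerRun V (op :: t)
  | appendNew : ∀ (V : List R) (r : R) (op : LOp O P R) (t : List (LOp O P R)),
      op.act = LedgerAct.append r → r ∉ V →
      LedgerRun (V ++ [r]) t → LedgerRun V (op :: t)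
  | appendDup : ∀ (V : List R) (r : R) (op : LOp O P R) (t : List (LOp O P R)),
      op.act = LedgerAct.append r → r ∈ V →
      LedgerRun V t → LedgerRun V (op :: t)

/-- A sequence of operations respects the happens-before order: no operation is placed
before an operation that happens before it. -/
def RespectsHB {O P R : Type} (σ : List (LOp O P R)) : Prop :=
  σ.Pairwise (fun a b => ¬ hb b a)

/-- A history is well-formed if every operation's invocation precedes its response and
no two distinct operations of the same process overlap (each process invokes one
operation at a time; the history being a list of complete operations, it is complete). -/
def WellFormed {O P R : Type} (H : List (LOp O P R)) : Prop :=
  (∀ a ∈ H, a.invT < a.resT) ∧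
  (∀ a ∈ H, ∀ b ∈ H, a.proc = b.proc → a ≠ b → (a.resT < b.invT ∨ b.resT < a.invT))

/-!
Merge the per-object linearizations greedily. Among the operations that are first in their
object's linearization, put the one with the least invocation time first, then recurse on
the rest. Nothing remaining can happen before it: each remaining operation `y` lies, in its
object's linearization, at or after some first operation `h`, and `h.invT ≤ y.resT`.
-/

theorem List.exists_cons_forall_le_of_exists_ne_nil {α β : Type*} (f : α → List β)
    (key : β → ℕ) (hne : ∃ a, f a ≠ []) :
    ∃ a x t, f a = x :: t ∧ ∀ a' y t', f a' = y :: t' → key x ≤ key y := by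
  classical
  have hex : ∃ n, ∃ a x t, f a = x :: t ∧ key x = n := by
    obtain ⟨a, ha⟩ := hne
    obtain ⟨x, t, hxt⟩ := List.exists_cons_of_ne_nil ha
    exact ⟨_, a, x, t, hxt, rfl⟩
  obtain ⟨a, x, t, hxt, hx⟩ := Nat.find_spec hex
  exact ⟨a, x, t, hxt, fun a' y t' hyt => hx ▸ Nat.find_min' hex ⟨a', y, t', hyt, rfl⟩⟩

section Merge

variable {O P R : Type}

theorem RespectsHB.invT_le_resT {h : LOp O P R} {t : List (LOp O P R)}
    (hτ : RespectsHB (h :: t)) (hh : h.invT < h.resT) {y : LOp O P R} (hy : y ∈ h :: t) :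
    h.invT ≤ y.resT := by
  rcases List.mem_cons.mp hy with rfl | hy
  · exact hh.le
  · exact not_lt.mp ((List.pairwise_cons.mp hτ).1 y hy)

variable [DecidableEq O]

theorem not_hb_of_forall_invT_le_head {H : List (LOp O P R)}
    (hwf : ∀ y ∈ H, y.invT < y.resT) {τ : O → List (LOp O P R)}
    (hperm : ∀ D, (τ D).Perm (H.filter (fun op => decide (op.obj = D))))
    (hτ : ∀ D, RespectsHB (τ D)) {x : LOp O P R}
    (hmin : ∀ D h t, τ D = h :: t → x.invT ≤ h.invT) {y : LOp O P R} (hy : y ∈ H) :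
    ¬ hb y x := by
  have hyτ : y ∈ τ y.obj := (hperm y.obj).mem_iff.mpr (List.mem_filter.mpr ⟨hy, by simp⟩)
  obtain ⟨h, t, hht⟩ := List.exists_cons_of_ne_nil (List.ne_nil_of_mem hyτ)
  have hh : h ∈ H := (List.mem_filter.mp ((hperm y.obj).subset (hht ▸ List.mem_cons_self))).1
  have hhy := (hht ▸ hτ y.obj).invT_le_resT (hwf h hh) (hht ▸ hyτ)
  have hxh := hmin _ _ _ hht
  unfold hb
  omega

theorem perm_filter_update_tail {H H' : List (LOp O P R)} {x : LOp O P R}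
    (hH : H.Perm (x :: H')) {τ : O → List (LOp O P R)}
    (hperm : ∀ D, (τ D).Perm (H.filter (fun op => decide (op.obj = D))))
    {t : List (LOp O P R)} (hx : τ x.obj = x :: t) (D : O) :
    (Function.update τ x.obj t D).Perm (H'.filter (fun op => decide (op.obj = D))) := by
  have h := (hperm D).trans (hH.filter _)
  rcases eq_or_ne D x.obj with rfl | hD
  · rw [hx, List.filter_cons_of_pos (by simp)] at h
    simpa using h.cons_inv
  · rw [List.filter_cons_of_neg (by simpa using hD.symm)] at h
    simpa [Function.update_of_ne hD] using h

theorem filter_cons_eq_of_update_tail {σ : List (LOp O P R)} {x : LOp O P R}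
    {τ : O → List (LOp O P R)} {t : List (LOp O P R)} (hx : τ x.obj = x :: t)
    (hσ : ∀ D, σ.filter (fun op => decide (op.obj = D)) = Function.update τ x.obj t D)
    (D : O) : (x :: σ).filter (fun op => decide (op.obj = D)) = τ D := by
  rcases eq_or_ne D x.obj with rfl | hD
  · rw [List.filter_cons_of_pos (by simp), hσ, Function.update_self, hx]
  · rw [List.filter_cons_of_neg (by simpa using hD.symm), hσ, Function.update_of_ne hD]

theorem exists_merge_of_respectsHB (H : List (LOp O P R)) (hwf : ∀ y ∈ H, y.invT < y.resT)
    (τ : O → List (LOp O P R))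
    (hperm : ∀ D, (τ D).Perm (H.filter (fun op => decide (op.obj = D))))
    (hτ : ∀ D, RespectsHB (τ D)) :
    ∃ σ : List (LOp O P R), σ.Perm H ∧ RespectsHB σ ∧
      ∀ D, σ.filter (fun op => decide (op.obj = D)) = τ D := by
  classical
  rcases eq_or_ne H [] with rfl | hne
  · exact ⟨[], .nil, .nil, fun D => (List.perm_nil.mp (hperm D)).symm⟩
  have hτne : ∃ D, τ D ≠ [] := by
    obtain ⟨y, hy⟩ := List.exists_mem_of_ne_nil H hne
    exact ⟨y.obj, List.ne_nil_of_mem <|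
      (hperm y.obj).mem_iff.mpr (List.mem_filter.mpr ⟨hy, by simp⟩)⟩
  obtain ⟨D, x, t, hxt, hmin⟩ := List.exists_cons_forall_le_of_exists_ne_nil τ LOp.invT hτne
  obtain ⟨hxH, hxD⟩ := List.mem_filter.mp ((hperm D).subset (hxt ▸ List.mem_cons_self))
  obtain rfl : x.obj = D := of_decide_eq_true hxD
  obtain ⟨H', hH⟩ : ∃ H', H.Perm (x :: H') := ⟨_, List.perm_cons_erase hxH⟩
  have hH' : ∀ y ∈ H', y ∈ H := fun y hy => hH.symm.subset (List.mem_cons_of_mem x hy)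
  have hτ' : ∀ D, RespectsHB (Function.update τ x.obj t D) :=
    Function.forall_update_iff _ (p := fun _ l => RespectsHB l) |>.mpr
      ⟨(List.pairwise_cons.mp (hxt ▸ hτ x.obj)).2, fun D _ => hτ D⟩
  obtain ⟨σ, hσ, hσhb, hστ⟩ := exists_merge_of_respectsHB H'
    (fun y hy => hwf y (hH' y hy)) _ (perm_filter_update_tail hH hperm hxt) hτ'
  refine ⟨x :: σ, (hσ.cons x).trans hH.symm, List.pairwise_cons.mpr ⟨fun y hy => ?_, hσhb⟩,
    filter_cons_eq_of_update_tail hxt hστ⟩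
  exact not_hb_of_forall_invT_le_head hwf hperm hτ hmin (hH' y (hσ.subset hy))
termination_by H.length
decreasing_by simp [hH.length_eq]

end Merge

theorem mdlo_linearizability_locality_general {O P R : Type} [DecidableEq O]
    (H : List (LOp O P R))
    (h_wf : WellFormed H)
    -- for every object D ∈ O, the projection H|D is linearizable w.r.t. the ledger
    -- sequential specification
    (h_local : ∀ D : O, ∃ τ : List (LOp O P R),
      τ.Perm (H.filter (fun op => decide (op.obj = D))) ∧
      RespectsHB τ ∧ LedgerRun [] τ) :
    -- then H is linearizable: some sequential permutation σ of H respects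
    -- happens-before and every per-object projection of σ satisfies the ledger
    -- sequential specification
    ∃ σ : List (LOp O P R), σ.Perm H ∧ RespectsHB σ ∧
      ∀ D : O, LedgerRun [] (σ.filter (fun op => decide (op.obj = D))) := by
  choose τ hperm hτ hrun using h_local
  obtain ⟨σ, hσ, hσhb, hστ⟩ := exists_merge_of_respectsHB H h_wf.1 τ hperm hτ
  exact ⟨σ, hσ, hσhb, fun D => hστ D ▸ hrun D⟩

theorem mdlo_linearizability_locality {O P R : Type} [DecidableEq O] [Fintype O]
    (H : List (LOp O P R))
    (h_wf : WellFormed H)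
    -- for every object D ∈ O, the projection H|D is linearizable w.r.t. the ledger
    -- sequential specification
    (h_local : ∀ D : O, ∃ τ : List (LOp O P R),
      τ.Perm (H.filter (fun op => decide (op.obj = D))) ∧
      RespectsHB τ ∧ LedgerRun [] τ) :
    -- then H is linearizable: some sequential permutation σ of H respects
    -- happens-before and every per-object projection of σ satisfies the ledger
    -- sequential specification
    ∃ σ : List (LOp O P R), σ.Perm H ∧ RespectsHB σ ∧
      ∀ D : O, LedgerRun [] (σ.filter (fun op => decide (op.obj = D))) :=
  mdlo_linearizability_locality_general H h_wf h_local
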